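/- arXiv:2209.01630 — 5 statements merged into one kernel-verified Lean document; each statement's English description precedes it below -/
import Mathlib

section
/- Let S = (Sₙ) be a sequence of real symmetric p×p matrices satisfying a linear recurrence of order r whose minimal polynomial P_S has r distinct real roots λ₀,…,λ_{r−1}, so Sₙ = ∑_{q} T_q λ_qⁿ for some real matrices T_q. If the block Hankel matrix H(r−1) = (S_{i+j})_{0≤i,j≤r−1} is positive semidefinite, then H(n) is positive semidefinite for every n ≥ r. -/
/-!
Writing `Sₖ = ∑_q λ_qᵏ T_q`, the Hankel form of any block vector `c₀,…,cₙ` becomes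
`∑_q c(λ_q)ᵀ T_q c(λ_q)` with `c(x) = ∑ᵢ xⁱ cᵢ`, so it depends on `c` only through the values
`c(λ_q)`. Since the `λ_q` are distinct, the Vandermonde matrix is invertible and these `r` values
are also attained by a vector polynomial of degree `< r`, whose Hankel form is nonnegative by
hypothesis.
-/

open Matrix

section HankelForm

variable {R n : Type*} [CommRing R] [Fintype n]

def hankelForm {m : ℕ} (S : ℕ → Matrix n n R) (c : Fin m → n → R) : R :=
  ∑ i : Fin m, ∑ j : Fin m, c i ⬝ᵥ S (i + j) *ᵥ c j

theorem hankelForm_eq_sum_of_eq_sum_pow_smul {ι : Type*} [Fintype ι] {m : ℕ}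
    {S : ℕ → Matrix n n R} {lam : ι → R} {T : ι → Matrix n n R}
    (hrep : ∀ k, S k = ∑ q, lam q ^ k • T q) (c : Fin m → n → R) :
    hankelForm S c =
      ∑ q, (∑ i : Fin m, lam q ^ (i : ℕ) • c i) ⬝ᵥ T q *ᵥ ∑ j : Fin m, lam q ^ (j : ℕ) • c j := by
  simp only [hankelForm, hrep, sum_mulVec, smul_mulVec, mulVec_sum, mulVec_smul, dotProduct_sum,
    sum_dotProduct, dotProduct_smul, smul_dotProduct, smul_eq_mul, pow_add,
    Finset.mul_sum]
  rw [Finset.sum_comm]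
  conv_rhs => rw [Finset.sum_comm]
  refine Finset.sum_congr rfl fun j _ => ?_
  conv_rhs => rw [Finset.sum_comm]
  refine Finset.sum_congr rfl fun i _ => Finset.sum_congr rfl fun q _ => ?_
  ring

end HankelForm

theorem exists_sum_pow_smul_eq {K V : Type*} [Field K] [AddCommGroup V] [Module K V] {r : ℕ}
    {lam : Fin r → K} (hlam : Function.Injective lam) (w : Fin r → V) :
    ∃ c : Fin r → V, ∀ q, ∑ i : Fin r, lam q ^ (i : ℕ) • c i = w q := by
  set A := vandermonde lam
  have hA : A * A⁻¹ = 1 :=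
    mul_nonsing_inv _ (isUnit_iff_ne_zero.mpr (det_vandermonde_ne_zero_iff.mpr hlam))
  refine ⟨fun i => ∑ q', A⁻¹ i q' • w q', fun q => ?_⟩
  calc ∑ i : Fin r, lam q ^ (i : ℕ) • ∑ q', A⁻¹ i q' • w q' = ∑ q', (A * A⁻¹) q q' • w q' := by
        simp only [Finset.smul_sum, smul_smul, mul_apply, Finset.sum_smul, A, vandermonde_apply]
        exact Finset.sum_comm
    _ = w q := by simp [hA, one_apply]

theorem hankel_psd_extension_general (p r : ℕ)
    (S : ℕ → Matrix (Fin p) (Fin p) ℝ)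
    (lam : Fin r → ℝ) (hlam : Function.Injective lam)
    (T : Fin r → Matrix (Fin p) (Fin p) ℝ)
    (hrep : ∀ n, S n = ∑ q, lam q ^ n • T q)
    (hH : ∀ c : Fin r → Fin p → ℝ,
      0 ≤ ∑ i, ∑ j, c i ⬝ᵥ (S (i.1 + j.1)).mulVec (c j)) :
    ∀ n, r ≤ n → ∀ c : Fin (n + 1) → Fin p → ℝ,
      0 ≤ ∑ i, ∑ j, c i ⬝ᵥ (S (i.1 + j.1)).mulVec (c j) := by
  intro n _ c
  obtain ⟨d, hd⟩ := exists_sum_pow_smul_eq hlam fun q => ∑ i : Fin (n + 1), lam q ^ (i : ℕ) • c i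
  have hHd : 0 ≤ hankelForm S d := hH d
  change 0 ≤ hankelForm S c
  rw [hankelForm_eq_sum_of_eq_sum_pow_smul hrep] at hHd ⊢
  simpa only [hd] using hHd

/-- If a recursive matrix sequence has the Binet representation
`Sₙ = ∑_q λ_qⁿ • T_q` with `r` distinct real roots and the block Hankel
matrix `H(r−1)` is positive semidefinite, then `H(n)` is positive
semidefinite for all `n ≥ r`. -/
theorem hankel_psd_extension (p r : ℕ)
    (S : ℕ → Matrix (Fin p) (Fin p) ℝ) (hsym : ∀ n, (S n).IsSymm)
    (lam : Fin r → ℝ) (hlam : Function.Injective lam)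
    (T : Fin r → Matrix (Fin p) (Fin p) ℝ)
    (hrep : ∀ n, S n = ∑ q, lam q ^ n • T q)
    (hH : ∀ c : Fin r → Fin p → ℝ,
      0 ≤ ∑ i, ∑ j, c i ⬝ᵥ (S (i.1 + j.1)).mulVec (c j)) :
    ∀ n, r ≤ n → ∀ c : Fin (n + 1) → Fin p → ℝ,
      0 ≤ ∑ i, ∑ j, c i ⬝ᵥ (S (i.1 + j.1)).mulVec (c j) :=
  hankel_psd_extension_general p r S lam hlam T hrep hH
end

section
/- Let S = (Sₙ) be a sequence of real symmetric p×p matrices satisfying a linear recurrence of order r, with H(r−1) = (S_{i+j})_{0≤i,j≤r−1} positive semidefinite, and suppose the infinite block Hankel form is positive semidefinite (i.e., all finite sections H(m) ⪰ 0). Then for any polynomial P ∈ ℝ[X] and any n ≥ 1: Pⁿ annihilates S if and only if P annihilates S. -/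
/-!
Annihilation of `S` by `P` says `P(T) S = 0` for the shift `T` on sequences, so the annihilating
polynomials form an ideal of `ℝ[X]`, and the claim is that this ideal is radical. If `Q²`
annihilates `S`, then for every vector `v` the block vector `cᵢ = Qᵢ v` is isotropic for the
positive semidefinite block Hankel form: its value is `vᵀ (Q²(T) S)₀ v = 0`. An isotropic vector
of a positive semidefinite form lies in its kernel, and the `n`-th block row of `H c = 0` reads
`(Q(T) S)ₙ v = 0`.
-/

open Polynomial Matrix

/-- The polynomial `P` annihilates the matrix sequence `S`. -/
def AnnM {p : ℕ} (S : ℕ → Matrix (Fin p) (Fin p) ℝ) (P : Polynomial ℝ) : Prop :=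
  ∀ n : ℕ, ∑ k ∈ Finset.range (P.natDegree + 1), P.coeff k • S (n + k) = 0

section Shift

variable (R M : Type*) [CommSemiring R] [AddCommMonoid M] [Module R M]

def seqShift : Module.End R (ℕ → M) := LinearMap.funLeft R M (· + 1)

variable {R M}

@[simp]
lemma seqShift_apply (s : ℕ → M) (n : ℕ) : seqShift R M s n = s (n + 1) := rfl

lemma seqShift_pow_apply (k : ℕ) (s : ℕ → M) (n : ℕ) : (seqShift R M ^ k) s n = s (n + k) := by
  induction k generalizing n with
  | zero => rfl
  | succ k ih =>
    rw [pow_succ', Module.End.mul_apply, seqShift_apply, ih]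
    ring_nf

lemma aeval_seqShift_apply {P : R[X]} {N : ℕ} (hN : P.natDegree < N) (s : ℕ → M) (n : ℕ) :
    aeval (seqShift R M) P s n = ∑ k ∈ Finset.range N, P.coeff k • s (n + k) := by
  simp [aeval_eq_sum_range' hN, seqShift_pow_apply]

end Shift

section AnnIdeal

variable {R M : Type*} [CommSemiring R] [AddCommMonoid M] [Module R M]

def annIdealAt (f : Module.End R M) (m : M) : Ideal R[X] where
  carrier := {P | aeval f P m = 0}
  add_mem' hP hQ := by simp_all
  zero_mem' := by simp
  smul_mem' Q P hP := by simp_all [aeval_mul]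

lemma mem_annIdealAt {f : Module.End R M} {m : M} {P : R[X]} :
    P ∈ annIdealAt f m ↔ aeval f P m = 0 :=
  Iff.rfl

end AnnIdeal

lemma annM_iff_mem_annIdealAt {p : ℕ} {S : ℕ → Matrix (Fin p) (Fin p) ℝ} {P : ℝ[X]} :
    AnnM S P ↔ P ∈ annIdealAt (seqShift ℝ _) S := by
  simp only [AnnM, mem_annIdealAt, funext_iff, aeval_seqShift_apply (Nat.lt_succ_self _),
    Pi.zero_apply]

section BlockHankel

variable {R n : Type*} [Fintype n]

def blockHankel (S : ℕ → Matrix n n R) (m : ℕ) :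
    Matrix (Fin m × n) (Fin m × n) R :=
  Matrix.of fun x y => S (x.1 + y.1) x.2 y.2

lemma blockHankel_posSemidef {S : ℕ → Matrix n n ℝ} (hsym : ∀ k, (S k).IsSymm)
    (hH : ∀ m : ℕ, ∀ c : Fin (m + 1) → n → ℝ,
      0 ≤ ∑ i, ∑ j, c i ⬝ᵥ (S (i.1 + j.1)).mulVec (c j)) (m : ℕ) :
    (blockHankel S (m + 1)).PosSemidef := by
  refine .of_dotProduct_mulVec_nonneg ?_ fun x => ?_
  · ext x y
    simp only [blockHankel, conjTranspose_apply, of_apply, star_trivial]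
    rw [add_comm, ← transpose_apply (S _), hsym]
  · refine (hH m fun i a => x (i, a)).trans_eq ?_
    simp only [blockHankel, star_trivial, dotProduct, mulVec, of_apply, Fintype.sum_prod_type,
      Finset.mul_sum]
    exact Finset.sum_congr rfl fun _ _ => Finset.sum_comm

variable [CommSemiring R] {m : ℕ} {Q : R[X]}

lemma blockHankel_mulVec (hQ : Q.natDegree < m) (S : ℕ → Matrix n n R) (v : n → R) :
    blockHankel S m *ᵥ (fun x => Q.coeff x.1 * v x.2) =
      fun x => (aeval (seqShift R _) Q S x.1 *ᵥ v) x.2 := by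
  ext ⟨i, a⟩
  rw [aeval_seqShift_apply hQ, ← Fin.sum_univ_eq_sum_range (fun k => Q.coeff k • S (i + k))]
  simp only [blockHankel, mulVec, dotProduct, of_apply, Fintype.sum_prod_type, Matrix.sum_apply,
    Finset.sum_mul]
  rw [Finset.sum_comm]
  refine Finset.sum_congr rfl fun _ _ => Finset.sum_congr rfl fun _ _ => ?_
  rw [Matrix.smul_apply, smul_eq_mul]
  ring

lemma dotProduct_blockHankel_mulVec (hQ : Q.natDegree < m) (S : ℕ → Matrix n n R) (v : n → R) :
    (fun x : Fin m × n => Q.coeff x.1 * v x.2) ⬝ᵥ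
        blockHankel S m *ᵥ (fun x => Q.coeff x.1 * v x.2) =
      v ⬝ᵥ aeval (seqShift R _) (Q ^ 2) S 0 *ᵥ v := by
  rw [blockHankel_mulVec hQ, sq, aeval_mul, Module.End.mul_apply, aeval_seqShift_apply hQ,
    ← Fin.sum_univ_eq_sum_range (fun k => Q.coeff k • aeval (seqShift R _) Q S (0 + k))]
  simp only [dotProduct, mulVec, Fintype.sum_prod_type, Matrix.sum_apply, Matrix.smul_apply,
    smul_eq_mul, Finset.sum_mul, Finset.mul_sum, zero_add]
  rw [Finset.sum_comm]
  refine Finset.sum_congr rfl fun _ _ => ?_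
  rw [Finset.sum_comm]
  refine Finset.sum_congr rfl fun _ _ => Finset.sum_congr rfl fun _ _ => ?_
  ring

end BlockHankel

lemma isRadical_annIdealAt_seqShift {n : Type*} [Fintype n] {S : ℕ → Matrix n n ℝ}
    (hS : ∀ m, (blockHankel S (m + 1)).PosSemidef) :
    (annIdealAt (seqShift ℝ _) S).IsRadical := by
  refine (Ideal.isRadical_iff_pow_one_lt 2 one_lt_two).2 fun Q hQ => ?_
  rw [mem_annIdealAt] at hQ ⊢
  funext k
  refine ext_iff_mulVec.2 fun v => ?_
  have hdeg : Q.natDegree < Q.natDegree + k + 1 := by omega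
  have hker := (hS (Q.natDegree + k)).dotProduct_mulVec_zero_iff (fun x => Q.coeff x.1 * v x.2)
  rw [star_trivial, dotProduct_blockHankel_mulVec hdeg, hQ, blockHankel_mulVec hdeg] at hker
  ext a
  simpa using congrFun (hker.1 (by simp)) (⟨k, by omega⟩, a)

theorem pow_annihilates_iff_general (p : ℕ)
    (S : ℕ → Matrix (Fin p) (Fin p) ℝ) (hsym : ∀ n, (S n).IsSymm)
    (hH : ∀ m : ℕ, ∀ c : Fin (m + 1) → Fin p → ℝ,
      0 ≤ ∑ i, ∑ j, c i ⬝ᵥ (S (i.1 + j.1)).mulVec (c j)) :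
    ∀ (P : Polynomial ℝ) (n : ℕ), 1 ≤ n → (AnnM S (P ^ n) ↔ AnnM S P) := by
  intro P n hn
  have hrad := isRadical_annIdealAt_seqShift (blockHankel_posSemidef hsym hH)
  simp only [annM_iff_mem_annIdealAt]
  exact ⟨fun h => hrad ⟨n, h⟩, fun h => Ideal.pow_mem_of_mem _ h n hn⟩

/-- For a recursive sequence of symmetric matrices whose block Hankel forms are
all positive semidefinite, a power `Pⁿ` (`n ≥ 1`) annihilates `S` iff `P`
annihilates `S`. -/
theorem pow_annihilates_iff (p r : ℕ)
    (S : ℕ → Matrix (Fin p) (Fin p) ℝ) (hsym : ∀ n, (S n).IsSymm)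
    (hrec : ∃ a : Fin r → ℝ, ∀ n, S (n + r) = ∑ i, a i • S (n + i.1))
    (hH : ∀ m : ℕ, ∀ c : Fin (m + 1) → Fin p → ℝ,
      0 ≤ ∑ i, ∑ j, c i ⬝ᵥ (S (i.1 + j.1)).mulVec (c j)) :
    ∀ (P : Polynomial ℝ) (n : ℕ), 1 ≤ n → (AnnM S (P ^ n) ↔ AnnM S P) :=
  pow_annihilates_iff_general p S hsym hH
end

section
/- Let S = (Sₙ) be a sequence of real symmetric p×p matrices satisfying a linear recurrence of order r. If all block Hankel matrices H(m) = (S_{i+j})_{0≤i,j≤m} are positive semidefinite, then the minimal polynomial P_S of S has only simple roots. -/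
open Polynomial Matrix

/-!
`P` annihilates `S` iff the matrix-valued Riesz functional `L_S` of `S` vanishes on the ideal
`(P)`. For a vector `v`, the scalar sequence `vᵀ Sₙ v` has positive semidefinite Hankel matrices,
so its Riesz functional `L` satisfies `L (h²) ≥ 0`, and by Cauchy–Schwarz `L (f²) = 0` forces
`L (g f) = 0` for every `g`. If `P_S = Q² R`, then `(Q R)² = R P_S` lies in `(P_S)`, so every
`vᵀ L_S (g Q R) v` vanishes; as `L_S (g Q R)` is symmetric, it is zero, i.e. `Q R` annihilates `S`.
Minimality of `P_S` then gives `deg Q = 0`.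
-/

namespace Polynomial

section rieszMap

variable {R M : Type*} [CommSemiring R] [AddCommMonoid M] [Module R M]

/-- The Riesz functional of `s`: `∑ aₖ Xᵏ ↦ ∑ aₖ • sₖ`. -/
noncomputable def rieszMap (s : ℕ → M) : R[X] →ₗ[R] M :=
  lsum fun n => LinearMap.toSpanSingleton R M (s n)

theorem rieszMap_apply (s : ℕ → M) (f : R[X]) : rieszMap s f = f.sum fun n a => a • s n :=
  lsum_apply _ _

@[simp]
theorem rieszMap_monomial (s : ℕ → M) (n : ℕ) (a : R) : rieszMap s (monomial n a) = a • s n := by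
  simp [rieszMap_apply]

theorem rieszMap_eq_sum_range (s : ℕ → M) (f : R[X]) :
    rieszMap s f = ∑ k ∈ Finset.range (f.natDegree + 1), f.coeff k • s k :=
  (rieszMap_apply s f).trans
    (sum_over_range' f (f := fun n a => a • s n) (fun _ => zero_smul _ _) _ (Nat.lt_succ_self _))

theorem rieszMap_X_pow_mul (s : ℕ → M) (n : ℕ) (f : R[X]) :
    rieszMap s (X ^ n * f) = rieszMap (fun k => s (n + k)) f := by
  have : (rieszMap s).comp (LinearMap.mulLeft R (X ^ n)) = rieszMap (fun k => s (n + k)) :=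
    lhom_ext' fun k => LinearMap.ext fun a => by simp [X_pow_mul_monomial, add_comm]
  exact LinearMap.congr_fun this f

theorem rieszMap_mul (s : ℕ → M) (f g : R[X]) :
    rieszMap s (f * g) = f.sum fun i a => g.sum fun j b => (a * b) • s (i + j) := by
  simp [mul_eq_sum_sum, map_sum, Polynomial.sum]

theorem forall_rieszMap_mul_eq_zero_iff (s : ℕ → M) (P : R[X]) :
    (∀ g, rieszMap s (g * P) = 0) ↔ ∀ n, rieszMap s (X ^ n * P) = 0 := by
  refine ⟨fun h n => h _, fun h g => ?_⟩
  have : (rieszMap s).comp (LinearMap.mulRight R P) = 0 :=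
    lhom_ext' fun n => LinearMap.ext fun a => by
      simp [← C_mul_X_pow_eq_monomial, ← smul_eq_C_mul, h n]
  exact LinearMap.congr_fun this g

end rieszMap

theorem rieszMap_mul_self_nonneg {s : ℕ → ℝ}
    (hs : ∀ m (x : Fin (m + 1) → ℝ), 0 ≤ ∑ i, ∑ j, x i * x j * s (i + j)) (h : ℝ[X]) :
    0 ≤ rieszMap s (h * h) := by
  have hrange : ∀ F : ℕ → ℝ → ℝ, (∀ n, F n 0 = 0) →
      h.sum F = ∑ i ∈ Finset.range (h.natDegree + 1), F i (h.coeff i) :=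
    fun F hF => sum_over_range' h hF _ (Nat.lt_succ_self _)
  rw [rieszMap_mul, hrange _ fun i => by simp [Polynomial.sum]]
  simp only [smul_eq_mul, Finset.sum_range]
  refine (hs h.natDegree fun i => h.coeff i).trans_eq (Finset.sum_congr rfl fun i _ => ?_)
  rw [hrange _ fun j => by simp, Finset.sum_range]

end Polynomial

theorem LinearMap.map_mul_eq_zero_of_map_mul_self_eq_zero {𝕜 A : Type*} [Field 𝕜]
    [LinearOrder 𝕜] [IsStrictOrderedRing 𝕜] [CommRing A] [Algebra 𝕜 A] (L : A →ₗ[𝕜] 𝕜)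
    (hL : ∀ h, 0 ≤ L (h * h)) {f : A} (hf : L (f * f) = 0) (g : A) : L (g * f) = 0 := by
  -- `t ↦ L ((t • f + g) ^ 2)` is a nonnegative quadratic whose leading coefficient vanishes.
  have hquad : ∀ t : 𝕜, 0 ≤ L (f * f) * (t * t) + 2 * L (g * f) * t + L (g * g) := fun t => by
    have hexp : (t • f + g) * (t • f + g) = (t * t) • (f * f) + (2 * t) • (g * f) + g * g := by
      simp only [Algebra.smul_def, map_mul, map_ofNat]
      ring
    have := hL (t • f + g)
    rw [hexp, map_add, map_add, map_smul, map_smul, smul_eq_mul, smul_eq_mul] at this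
    linarith
  have := discrim_le_zero hquad
  rw [discrim, hf] at this
  nlinarith [sq_nonneg (L (g * f))]

theorem Matrix.IsSymm.eq_zero_of_dotProduct_mulVec_self {n : Type*} [Fintype n]
    {A : Matrix n n ℝ} (hA : A.IsSymm) (h : ∀ v, v ⬝ᵥ A *ᵥ v = 0) : A = 0 := by
  classical
  have hT : A.toEuclideanLin.IsSymmetric :=
    isSymmetric_toEuclideanLin_iff.mpr (isHermitian_iff_isSymm.mpr hA)
  refine toEuclideanLin.map_eq_zero_iff.mp (hT.inner_map_self_eq_zero.mp fun x => ?_)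
  simpa [EuclideanSpace.inner_eq_star_dotProduct, dotProduct_comm] using h x.ofLp

namespace Polynomial

variable {n : Type*}

theorem dotProduct_rieszMap_mulVec [Fintype n] (S : ℕ → Matrix n n ℝ) (v w : n → ℝ)
    (f : ℝ[X]) :
    v ⬝ᵥ rieszMap S f *ᵥ w = rieszMap (fun k => v ⬝ᵥ S k *ᵥ w) f := by
  simp [rieszMap_eq_sum_range, sum_mulVec, dotProduct_sum, smul_mulVec]

theorem isSymm_rieszMap {S : ℕ → Matrix n n ℝ} (hS : ∀ k, (S k).IsSymm) (f : ℝ[X]) :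
    (rieszMap S f).IsSymm := by
  simp [rieszMap_eq_sum_range, IsSymm, transpose_sum, (hS _).eq]

end Polynomial

theorem annM_iff_rieszMap_mul_eq_zero {p : ℕ} (S : ℕ → Matrix (Fin p) (Fin p) ℝ)
    (P : ℝ[X]) :
    AnnM S P ↔ ∀ g, rieszMap S (g * P) = 0 := by
  rw [forall_rieszMap_mul_eq_zero_iff]
  simp only [rieszMap_X_pow_mul]
  simp only [rieszMap_eq_sum_range, AnnM]

theorem minimalPoly_squarefree_of_hankel_psd_general (p : ℕ)
    (S : ℕ → Matrix (Fin p) (Fin p) ℝ) (hsym : ∀ n, (S n).IsSymm)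
    (hH : ∀ m : ℕ, ∀ c : Fin (m + 1) → Fin p → ℝ,
      0 ≤ ∑ i, ∑ j, c i ⬝ᵥ (S (i.1 + j.1)).mulVec (c j))
    (PS : Polynomial ℝ) (hPSmonic : PS.Monic)
    (hPSgen : ∀ Q : Polynomial ℝ, AnnM S Q ↔ PS ∣ Q) :
    Squarefree PS := by
  rintro Q ⟨R, rfl⟩
  have hpos (v : Fin p → ℝ) (h : ℝ[X]) : 0 ≤ rieszMap (fun k => v ⬝ᵥ S k *ᵥ v) (h * h) :=
    rieszMap_mul_self_nonneg (fun m x => by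
      simpa [mulVec_smul, dotProduct_smul, smul_dotProduct, mul_assoc, mul_left_comm]
        using hH m fun i => x i • v) h
  have hAnn : AnnM S (Q * R) := by
    refine (annM_iff_rieszMap_mul_eq_zero S _).2 fun g =>
      (isSymm_rieszMap hsym _).eq_zero_of_dotProduct_mulVec_self fun v => ?_
    rw [dotProduct_rieszMap_mulVec]
    refine (rieszMap _).map_mul_eq_zero_of_map_mul_self_eq_zero (hpos v) ?_ g
    rw [← dotProduct_rieszMap_mulVec, show Q * R * (Q * R) = R * (Q * Q * R) by ring,
      (annM_iff_rieszMap_mul_eq_zero S _).1 ((hPSgen _).2 dvd_rfl) R, zero_mulVec,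
      dotProduct_zero]
  have hQ : Q ≠ 0 := left_ne_zero_of_mul (left_ne_zero_of_mul hPSmonic.ne_zero)
  have hR : R ≠ 0 := right_ne_zero_of_mul hPSmonic.ne_zero
  have hdeg := natDegree_le_of_dvd ((hPSgen _).1 hAnn) (mul_ne_zero hQ hR)
  rw [natDegree_mul (mul_ne_zero hQ hQ) hR, natDegree_mul hQ hQ, natDegree_mul hQ hR] at hdeg
  rw [isUnit_iff_degree_eq_zero, degree_eq_natDegree hQ]
  norm_cast
  omega

/-- If all block Hankel matrices of a recursive sequence of symmetric matrices
are positive semidefinite, then its minimal polynomial is squarefree (has only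
simple roots). -/
theorem minimalPoly_squarefree_of_hankel_psd (p r : ℕ)
    (S : ℕ → Matrix (Fin p) (Fin p) ℝ) (hsym : ∀ n, (S n).IsSymm)
    (hrec : ∃ a : Fin r → ℝ, ∀ n, S (n + r) = ∑ i, a i • S (n + i.1))
    (hH : ∀ m : ℕ, ∀ c : Fin (m + 1) → Fin p → ℝ,
      0 ≤ ∑ i, ∑ j, c i ⬝ᵥ (S (i.1 + j.1)).mulVec (c j))
    (PS : Polynomial ℝ) (hPSmonic : PS.Monic)
    (hPSgen : ∀ Q : Polynomial ℝ, AnnM S Q ↔ PS ∣ Q) :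
    Squarefree PS :=
  minimalPoly_squarefree_of_hankel_psd_general p S hsym hH PS hPSmonic hPSgen
end

section
/- Let λ₀,…,λ_{r−1} be distinct real numbers and T₀,…,T_{r−1} real symmetric p×p matrices with Sₙ = ∑_q T_q λ_qⁿ, and suppose ∑_{i,j=0}^{r−1} cᵢᵀ S_{i+j} c_j ≥ 0 for all c₀,…,c_{r−1} ∈ ℝᵖ. Then each T_q is positive semidefinite. -/
/-!
Writing `Q(X) = ∑ᵢ cᵢ Xⁱ` with vector coefficients, the moment representation turns the block
Hankel form into `∑_q Q(λ_q) ⬝ T_q Q(λ_q)`. Choosing `Q = v · L_q`, with `L_q` the Lagrange basis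
polynomial of degree `r - 1` at the distinct nodes `λ`, kills every term but `v ⬝ T_q v`, which is
therefore nonnegative.
-/

open Matrix Finset

theorem Matrix.sum_hankel_form_eq_sum_dotProduct {R ι n : Type*} [CommSemiring R]
    [Fintype ι] [Fintype n] {m : ℕ} (lam : ι → R) (T : ι → Matrix n n R)
    (S : ℕ → Matrix n n R) (hS : ∀ k, S k = ∑ q, lam q ^ k • T q) (c : Fin m → n → R) :
    ∑ i, ∑ j, c i ⬝ᵥ S (i.1 + j.1) *ᵥ c j =
      ∑ q, (∑ i, lam q ^ i.1 • c i) ⬝ᵥ T q *ᵥ ∑ j, lam q ^ j.1 • c j := by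
  simp only [hS, sum_mulVec, mulVec_sum, dotProduct_sum, sum_dotProduct, smul_mulVec,
    mulVec_smul, smul_dotProduct, dotProduct_smul, smul_eq_mul, pow_add, mul_sum]
  rw [sum_comm]
  conv_rhs => rw [sum_comm]
  refine sum_congr rfl fun j _ => ?_
  rw [sum_comm]
  exact sum_congr rfl fun q _ => sum_congr rfl fun i _ => by ring

theorem Polynomial.eval_eq_sum_fin {R : Type*} [Semiring R] {p : Polynomial R} {m : ℕ}
    (hp : p.natDegree < m) (x : R) : p.eval x = ∑ i : Fin m, p.coeff i * x ^ i.1 := by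
  rw [eval_eq_sum_range' hp, Fin.sum_univ_eq_sum_range (fun i => p.coeff i * x ^ i)]

theorem Lagrange.eval_basis_univ {F : Type*} [Field F] {r : ℕ} {lam : Fin r → F}
    (hlam : Function.Injective lam) (q q' : Fin r) :
    (Lagrange.basis univ lam q).eval (lam q') = if q' = q then 1 else 0 := by
  split_ifs with h
  · exact h ▸ eval_basis_self hlam.injOn (mem_univ q')
  · exact eval_basis_of_ne (Ne.symm h) (mem_univ q')

/-- If `Sₙ = ∑_q λ_qⁿ • T_q` with distinct `λ_q` and symmetric `T_q`, and the
block Hankel form of order `r−1` is nonnegative, then each `T_q` is positive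
semidefinite. -/
theorem weights_psd_of_hankel_psd (p r : ℕ)
    (lam : Fin r → ℝ) (hlam : Function.Injective lam)
    (T : Fin r → Matrix (Fin p) (Fin p) ℝ) (hTsym : ∀ q, (T q).IsSymm)
    (S : ℕ → Matrix (Fin p) (Fin p) ℝ)
    (hrep : ∀ n, S n = ∑ q, lam q ^ n • T q)
    (hH : ∀ c : Fin r → Fin p → ℝ,
      0 ≤ ∑ i, ∑ j, c i ⬝ᵥ (S (i.1 + j.1)).mulVec (c j)) :
    ∀ q, (T q).PosSemidef := by
  intro q
  set P := Lagrange.basis univ lam q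
  have hP : P.natDegree < r := by
    rw [Lagrange.natDegree_basis hlam.injOn (mem_univ q), card_fin]
    exact Nat.sub_lt q.pos one_pos
  refine posSemidef_iff_dotProduct_mulVec.2 ⟨isHermitian_iff_isSymm.2 (hTsym q), fun v => ?_⟩
  have hP_eval : ∀ q', ∑ i : Fin r, lam q' ^ i.1 • P.coeff i • v = if q' = q then v else 0 := by
    intro q'
    simp_rw [smul_smul, ← sum_smul, mul_comm (lam q' ^ _), ← Polynomial.eval_eq_sum_fin hP, P,
      Lagrange.eval_basis_univ hlam, ite_smul, one_smul, zero_smul]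
  have h := hH fun i => P.coeff i • v
  rw [sum_hankel_form_eq_sum_dotProduct lam T S hrep] at h
  simp only [hP_eval] at h
  rwa [sum_eq_single q (fun q' _ hq' => by simp [hq']) (by simp), if_pos rfl] at h
end

section
/- There exists a sequence of 2×2 real symmetric matrices (Sₙ) such that every entry sequence (s_{ij}^{(n)})ₙ is a scalar Hamburger moment sequence (admits a nonnegative representing measure on ℝ), but (Sₙ) itself is not a matrix moment sequence; for example Sₙ with entries s₁₁ = 1+2ⁿ, s₁₂ = s₂₁ = 1+3·2ⁿ, s₂₂ = 2ⁿ fails, since Sₙ = A·1ⁿ + B·2ⁿ with A = [[1,1],[1,0]], B = [[1,3],[3,1]] not positive semidefinite, and indeed the block Hankel matrix (S_{i+j})_{0≤i,j≤1} is not positive semidefinite. -/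
/-!
Each entry sequence has the form `t + s * 2 ^ n` with `t, s ≥ 0`, the moment sequence of
`t • δ₁ + s • δ₂`, and moment sequences form a convex cone. The matrix sequence is nevertheless
not a matrix moment sequence: its zeroth term `S 0 = !![2, 4; 4, 1]` is indefinite (its quadratic
form is `-5` at `(1, -1)`), and the block Hankel form restricted to the first block is the
quadratic form of `S 0`.
-/

open Matrix MeasureTheory

def IsHamburgerMomentSequence (m : ℕ → ℝ) : Prop :=
  ∃ μ : Measure ℝ, ∀ n : ℕ, Integrable (fun x : ℝ => x ^ n) μ ∧ m n = ∫ x, x ^ n ∂μ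

namespace IsHamburgerMomentSequence

theorem pow (a : ℝ) : IsHamburgerMomentSequence fun n => a ^ n :=
  ⟨Measure.dirac a, fun n => ⟨integrable_dirac (by simp), by rw [integral_dirac]⟩⟩

theorem add {m m' : ℕ → ℝ} (hm : IsHamburgerMomentSequence m)
    (hm' : IsHamburgerMomentSequence m') : IsHamburgerMomentSequence (m + m') := by
  obtain ⟨μ, hμ⟩ := hm
  obtain ⟨μ', hμ'⟩ := hm'
  refine ⟨μ + μ', fun n => ⟨(hμ n).1.add_measure (hμ' n).1, ?_⟩⟩
  rw [integral_add_measure (hμ n).1 (hμ' n).1, Pi.add_apply, (hμ n).2, (hμ' n).2]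

theorem const_smul {m : ℕ → ℝ} (hm : IsHamburgerMomentSequence m) {c : ℝ} (hc : 0 ≤ c) :
    IsHamburgerMomentSequence (c • m) := by
  obtain ⟨μ, hμ⟩ := hm
  refine ⟨ENNReal.ofReal c • μ, fun n => ⟨(hμ n).1.smul_measure ENNReal.ofReal_ne_top, ?_⟩⟩
  rw [integral_smul_measure, ENNReal.toReal_ofReal hc, Pi.smul_apply, (hμ n).2]

end IsHamburgerMomentSequence

theorem isHamburgerMomentSequence_two_atoms {t s : ℝ} (ht : 0 ≤ t) (hs : 0 ≤ s) (a b : ℝ) :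
    IsHamburgerMomentSequence fun n => t * a ^ n + s * b ^ n :=
  ((IsHamburgerMomentSequence.pow a).const_smul ht).add
    ((IsHamburgerMomentSequence.pow b).const_smul hs)

theorem Matrix.isSymm_fin_two_of {α : Type*} (a b d : α) : (!![a, b; b, d]).IsSymm := by
  ext i j
  fin_cases i <;> fin_cases j <;> rfl

theorem exists_blockHankel_form_neg {ι R : Type*} [Fintype ι] [CommRing R] [LT R] {k : ℕ}
    [NeZero k] {S : ℕ → Matrix ι ι R} {v : ι → R} (hv : v ⬝ᵥ S 0 *ᵥ v < 0) :
    ∃ c : Fin k → ι → R, ∑ i, ∑ j, c i ⬝ᵥ S (i.1 + j.1) *ᵥ c j < 0 := by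
  refine ⟨Pi.single 0 v, ?_⟩
  rwa [Fintype.sum_eq_single 0 fun i hi => by simp [hi],
    Fintype.sum_eq_single 0 fun j hj => by simp [hj], Pi.single_eq_same, Fin.val_zero]

/-- There is a sequence of 2×2 real symmetric matrices whose entry sequences
are all scalar Hamburger moment sequences, yet which is not a matrix moment
sequence: the block Hankel matrix `H(1) = (S_{i+j})_{0≤i,j≤1}` fails to be
positive semidefinite. -/
theorem entrywise_moment_not_matrix_moment :
    ∃ S : ℕ → Matrix (Fin 2) (Fin 2) ℝ,
      (∀ n, S n = !![1 + 2 ^ n, 1 + 3 * 2 ^ n; 1 + 3 * 2 ^ n, (2 : ℝ) ^ n]) ∧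
      (∀ n, (S n).IsSymm) ∧
      (∀ i j : Fin 2, ∃ μ : Measure ℝ,
        ∀ n : ℕ, Integrable (fun x : ℝ => x ^ n) μ ∧ S n i j = ∫ x, x ^ n ∂μ) ∧
      (∃ c : Fin 2 → Fin 2 → ℝ,
        ∑ i, ∑ j, c i ⬝ᵥ (S (i.1 + j.1)).mulVec (c j) < 0) := by
  let S : ℕ → Matrix (Fin 2) (Fin 2) ℝ := fun n =>
    !![1 + 2 ^ n, 1 + 3 * 2 ^ n; 1 + 3 * 2 ^ n, 2 ^ n]
  refine ⟨S, fun n => rfl, fun n => Matrix.isSymm_fin_two_of _ _ _, ?_,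
    exists_blockHankel_form_neg (S := S) (v := ![1, -1]) ?_⟩
  · have h11 : IsHamburgerMomentSequence fun n => 1 + 2 ^ n := by
      simpa using isHamburgerMomentSequence_two_atoms zero_le_one zero_le_one 1 2
    have h12 : IsHamburgerMomentSequence fun n => 1 + 3 * 2 ^ n := by
      simpa using isHamburgerMomentSequence_two_atoms zero_le_one zero_le_three 1 2
    intro i j
    fin_cases i <;> fin_cases j
    exacts [h11, h12, h12, IsHamburgerMomentSequence.pow 2]
  · norm_num [S, dotProduct, mulVec, Fin.sum_univ_two]
end
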